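/- The minimal decompositions of a triangulated sphere T are exactly the triples ({T₀}, T \ {T₀}, ∅) where T₀ is a triangle of T and some vertex of T not contained in T₀ has maximal valence among the vertices of T. In particular, the only planar minimal genus-surface is a single triangle. -/

import Mathlib

/-!
Deleting a triangle `T₀` from a triangulated sphere leaves a disc whose boundary is the
boundary of `T₀`, so `({T₀}, K \ {T₀}, ∅)` is a decomposition as soon as some vertex of
maximal valence avoids `T₀`; such a vertex and triangle always exist, so minimal decompositions
have a single triangle as genus-surface. Conversely, for pieces of a surface meeting pairwise in
circles, double counting the vertices and edges shared by several pieces shows that the Euler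
characteristics of the pieces add up to at most `χ(K) = 2`. With `G` a triangle and all other
pieces discs this leaves no room for the `Dᵢ`, so `D = K \ {T₀}`, and its interior vertex of
maximal valence cannot lie on `T₀`.
-/

namespace Tri

/-- A (pure 2-dimensional) simplicial complex, given by its set of triangles
(each triangle is a 3-element finset of vertex labels). -/
abbrev Complex := Finset (Finset ℕ)

/-- The vertices of a complex. -/
def vertices (K : Complex) : Finset ℕ := K.biUnion id

/-- The edges of a complex: 2-element subsets of triangles. -/
def edges (K : Complex) : Finset (Finset ℕ) := K.biUnion fun t => t.powersetCard 2

/-- The valence of a vertex: the number of triangles containing it. -/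
def valence (K : Complex) (v : ℕ) : ℕ := (K.filter (fun t => v ∈ t)).card

/-- The maximal vertex-valence of a complex. -/
def mv (K : Complex) : ℕ := (vertices K).sup (valence K)

/-- Euler characteristic V - E + T. -/
def eulerChar (K : Complex) : ℤ :=
  ((vertices K).card : ℤ) - (edges K).card + K.card

/-- Two triangles of `K` both containing `v` and sharing an edge. -/
def adjAt (K : Complex) (v : ℕ) (t₁ t₂ : Finset ℕ) : Prop :=
  t₁ ∈ K ∧ t₂ ∈ K ∧ v ∈ t₁ ∧ v ∈ t₂ ∧ (t₁ ∩ t₂).card = 2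

/-- Two triangles of `K` sharing an edge. -/
def adj (K : Complex) (t₁ t₂ : Finset ℕ) : Prop :=
  t₁ ∈ K ∧ t₂ ∈ K ∧ (t₁ ∩ t₂).card = 2

/-- A triangulation of a connected compact surface, possibly with boundary:
every triangle has 3 vertices, every edge lies in at most two triangles,
the triangles around every vertex are connected via edges through that vertex
(so every vertex link is a path or a circle), and the complex is connected. -/
structure IsSurface (K : Complex) : Prop where
  nonempty : K.Nonempty
  card3 : ∀ t ∈ K, t.card = 3
  edge_le : ∀ e ∈ edges K, (K.filter (fun t => e ⊆ t)).card ≤ 2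
  link_conn : ∀ v, ∀ t₁ ∈ K, ∀ t₂ ∈ K, v ∈ t₁ → v ∈ t₂ →
    Relation.ReflTransGen (adjAt K v) t₁ t₂
  conn : ∀ t₁ ∈ K, ∀ t₂ ∈ K, Relation.ReflTransGen (adj K) t₁ t₂

/-- A triangulation of a closed (connected compact) surface: every edge lies
in exactly two triangles. -/
def IsClosedSurface (K : Complex) : Prop :=
  IsSurface K ∧ ∀ e ∈ edges K, (K.filter (fun t => e ⊆ t)).card = 2

/-- Boundary edges: edges lying in exactly one triangle. -/
def bdryEdges (K : Complex) : Finset (Finset ℕ) :=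
  (edges K).filter (fun e => (K.filter (fun t => e ⊆ t)).card = 1)

/-- Boundary vertices. -/
def bdryVertices (K : Complex) : Finset ℕ := (bdryEdges K).biUnion id

/-- Interior vertices. -/
def intVertices (K : Complex) : Finset ℕ := vertices K \ bdryVertices K

/-- A triangulated disc: a connected compact surface with nonempty boundary and
Euler characteristic 1. -/
def IsDisc (K : Complex) : Prop :=
  IsSurface K ∧ eulerChar K = 1 ∧ (bdryEdges K).Nonempty

/-- Two edges sharing a vertex. -/
def edgeAdj (E : Complex) (e₁ e₂ : Finset ℕ) : Prop :=
  e₁ ∈ E ∧ e₂ ∈ E ∧ (e₁ ∩ e₂).Nonempty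

/-- A set of edges forming a triangulated circle. -/
def IsCircle (E : Complex) : Prop :=
  E.Nonempty ∧ (∀ e ∈ E, e.card = 2) ∧
  (∀ v ∈ E.biUnion id, (E.filter (fun e => v ∈ e)).card = 2) ∧
  ∀ e₁ ∈ E, ∀ e₂ ∈ E, Relation.ReflTransGen (edgeAdj E) e₁ e₂

/-- Simplicial isomorphism (re-labeling). -/
def Iso (K₁ K₂ : Complex) : Prop :=
  ∃ f : ℕ → ℕ, Set.InjOn f (vertices K₁) ∧ K₁.image (Finset.image f) = K₂

/-- The boundary of the tetrahedron. -/
def tetra : Complex := {{1,2,3},{1,2,4},{1,3,4},{2,3,4}}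

/-- The boundary of the octahedron. -/
def octa : Complex := {{1,2,3},{1,2,4},{1,3,5},{1,4,5},{2,3,6},{2,4,6},{3,5,6},{4,5,6}}

/-- The vertices of the link of a vertex. -/
def linkV (K : Complex) (v : ℕ) : Finset ℕ :=
  ((K.filter (fun t => v ∈ t)).biUnion id).erase v

/-- The result of the inverse T-move removing the vertex `v`. -/
def invT (K : Complex) (v : ℕ) : Complex :=
  insert (linkV K v) (K.filter (fun t => v ∉ t))

/-- `K'` is obtained from `K` by an inverse T-move: a 3-valent vertex whose
link does not bound a triangle is removed. -/
def InvTStep (K K' : Complex) : Prop :=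
  ∃ v, valence K v = 3 ∧ linkV K v ∉ K ∧ K' = invT K v

/-- A root: a closed triangulated surface admitting no inverse T-move. -/
def IsRoot (K : Complex) : Prop := IsClosedSurface K ∧ ∀ K', ¬ InvTStep K K'

/-- `R` is a root of `K`: obtained from `K` by inverse T-moves, with no
further inverse T-move applicable. -/
def IsRootOf (R K : Complex) : Prop :=
  Relation.ReflTransGen InvTStep K R ∧ ∀ R', ¬ InvTStep R R'

/-- The directed edges of an ordered triangle. -/
def dedges (p : ℕ × ℕ × ℕ) : Finset (ℕ × ℕ) := {(p.1, p.2.1), (p.2.1, p.2.2), (p.2.2, p.1)}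

/-- Orientability: a coherent choice of cyclic orders on the triangles,
i.e. no directed edge is shared by two distinct triangles. -/
def Orientable (K : Complex) : Prop :=
  ∃ o : Finset ℕ → ℕ × ℕ × ℕ,
    (∀ t ∈ K, ({(o t).1, (o t).2.1, (o t).2.2} : Finset ℕ) = t) ∧
    ∀ t₁ ∈ K, ∀ t₂ ∈ K, t₁ ≠ t₂ → ∀ p ∈ dedges (o t₁), p ∉ dedges (o t₂)

/-- Two closed triangulated surfaces triangulate the same surface iff they
have the same Euler characteristic and the same orientability. -/
def SameSurface (K₁ K₂ : Complex) : Prop :=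
  eulerChar K₁ = eulerChar K₂ ∧ (Orientable K₁ ↔ Orientable K₂)

/-- The intersection of two subcomplexes is a triangulated circle or empty. -/
def CircleInter (A B : Complex) : Prop :=
  (IsCircle (edges A ∩ edges B) ∨ edges A ∩ edges B = ∅) ∧
  vertices A ∩ vertices B = (edges A ∩ edges B).biUnion id

/-- A decomposition `(G, D, Ds)` of a closed triangulated surface `K`. -/
structure IsDecomp (K G D : Complex) (Ds : Finset Complex) : Prop where
  closed : IsClosedSurface K
  subG : G ⊆ K
  subD : D ⊆ K
  subDs : ∀ Di ∈ Ds, Di ⊆ K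
  surfG : IsSurface G
  discD : IsDisc D
  discDs : ∀ Di ∈ Ds, IsDisc Di
  maxv : ∃ v ∈ intVertices D, valence K v = mv K
  cover : G ∪ D ∪ Ds.sup id = K
  disjGD : Disjoint G D
  disjGDs : ∀ Di ∈ Ds, Disjoint G Di
  disjDDs : ∀ Di ∈ Ds, Disjoint D Di
  disjDsDs : ∀ Di ∈ Ds, ∀ Dj ∈ Ds, Di ≠ Dj → Disjoint Di Dj
  interGD : CircleInter G D
  interGDs : ∀ Di ∈ Ds, CircleInter G Di
  interDDs : ∀ Di ∈ Ds, CircleInter D Di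
  interDsDs : ∀ Di ∈ Ds, ∀ Dj ∈ Ds, Di ≠ Dj → CircleInter Di Dj

/-- A minimal decomposition: the genus-surface has the fewest triangles. -/
def IsMinDecomp (K G D : Complex) (Ds : Finset Complex) : Prop :=
  IsDecomp K G D Ds ∧ ∀ G' D' Ds', IsDecomp K G' D' Ds' → G.card ≤ G'.card

open Finset

lemma mem_vertices {K : Complex} {v : ℕ} : v ∈ vertices K ↔ ∃ t ∈ K, v ∈ t := by
  simp [vertices]

lemma mem_edges {K : Complex} {e : Finset ℕ} : e ∈ edges K ↔ ∃ t ∈ K, e ⊆ t ∧ #e = 2 := by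
  simp [edges, mem_powersetCard]

lemma vertices_mono {A B : Complex} (h : A ⊆ B) : vertices A ⊆ vertices B :=
  biUnion_subset_biUnion_of_subset_left _ h

lemma edges_mono {A B : Complex} (h : A ⊆ B) : edges A ⊆ edges B :=
  biUnion_subset_biUnion_of_subset_left _ h

lemma subset_vertices {K : Complex} {t : Finset ℕ} (ht : t ∈ K) : t ⊆ vertices K :=
  fun _ hv => mem_vertices.2 ⟨t, ht, hv⟩

lemma mem_edges_of_subset {K : Complex} {t e : Finset ℕ} (ht : t ∈ K) (he : e ⊆ t)
    (hc : #e = 2) : e ∈ edges K :=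
  mem_edges.2 ⟨t, ht, he, hc⟩

lemma vertices_singleton (t : Finset ℕ) : vertices {t} = t := by simp [vertices]

lemma edges_singleton (t : Finset ℕ) : edges {t} = t.powersetCard 2 := by simp [edges]

lemma exists_pair_subset_mem {t : Finset ℕ} {v : ℕ} (ht : 2 ≤ #t) (hv : v ∈ t) :
    ∃ e ⊆ t, #e = 2 ∧ v ∈ e := by
  obtain ⟨e, hve, het, hc⟩ :=
    exists_subsuperset_card_eq (singleton_subset_iff.2 hv) (by simp) ht
  exact ⟨e, het, hc, singleton_subset_iff.1 hve⟩

lemma biUnion_powersetCard_two {t : Finset ℕ} (ht : 2 ≤ #t) :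
    (t.powersetCard 2).biUnion id = t := by
  refine Subset.antisymm (biUnion_subset.2 fun e he => (mem_powersetCard.1 he).1) ?_
  intro v hv
  obtain ⟨e, het, hc, hve⟩ := exists_pair_subset_mem ht hv
  exact mem_biUnion.2 ⟨e, mem_powersetCard.2 ⟨het, hc⟩, hve⟩

lemma card_filter_powersetCard_two_mem {t : Finset ℕ} {v : ℕ} (hv : v ∈ t) :
    #{e ∈ t.powersetCard 2 | v ∈ e} = #t - 1 := by
  rw [← card_erase_of_mem hv, ← Nat.choose_one_right #(t.erase v), ← card_powersetCard]
  refine card_nbij' (·.erase v) (insert v) ?_ ?_ ?_ ?_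
  · intro e he
    obtain ⟨⟨het, hc⟩, hve⟩ := by simpa only [coe_filter, mem_powersetCard] using he
    simpa [mem_powersetCard, card_erase_of_mem hve, hc] using erase_subset_erase v het
  · intro s hs
    obtain ⟨hst, hc⟩ := mem_powersetCard.1 hs
    have hvs : v ∉ s := fun h => by simpa using hst h
    simp only [coe_filter, mem_powersetCard, Set.mem_ofPred_eq]
    refine ⟨⟨insert_subset hv (hst.trans (erase_subset v t)), ?_⟩, mem_insert_self v s⟩
    rw [card_insert_of_notMem hvs, hc]
  · intro e he
    exact insert_erase (mem_filter.1 he).2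
  · intro s hs
    exact erase_insert fun h => by simpa using (mem_powersetCard.1 hs).1 h

lemma IsCircle.card_biUnion {E : Complex} (h : IsCircle E) : #(E.biUnion id) = #E := by
  obtain ⟨-, hc, hdeg, -⟩ := h
  have hcount := card_mul_eq_card_mul (fun (e : Finset ℕ) v => v ∈ e) (m := 2) (n := 2)
    (s := E) (t := E.biUnion id)
    (fun e he => by
      have hsub : e ⊆ E.biUnion id := subset_biUnion_of_mem id he
      rw [bipartiteAbove, filter_mem_eq_inter, inter_eq_right.2 hsub, hc e he])
    (fun v hv => hdeg v hv)
  omega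

lemma isCircle_powersetCard_two {t : Finset ℕ} (ht : #t = 3) :
    IsCircle (t.powersetCard 2) := by
  refine ⟨powersetCard_nonempty.2 (by omega), fun e he => (mem_powersetCard.1 he).2,
    fun v hv => ?_, fun e₁ he₁ e₂ he₂ => .single ⟨he₁, he₂, ?_⟩⟩
  · rw [biUnion_powersetCard_two (by omega)] at hv
    rw [card_filter_powersetCard_two_mem hv, ht]
  · obtain ⟨hs₁, hc₁⟩ := mem_powersetCard.1 he₁
    obtain ⟨hs₂, hc₂⟩ := mem_powersetCard.1 he₂
    have := card_union_add_card_inter e₁ e₂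
    have := card_le_card (union_subset hs₁ hs₂)
    rw [← card_pos]
    omega

lemma IsSurface.eq_of_subset {K : Complex} (hK : IsSurface K) {t s : Finset ℕ} (ht : t ∈ K)
    (hs : s ∈ K) (hts : t ⊆ s) : t = s :=
  eq_of_subset_of_card_le hts (by rw [hK.card3 t ht, hK.card3 s hs])

lemma IsSurface.card_inter_le_two {K : Complex} (hK : IsSurface K) {t s : Finset ℕ}
    (ht : t ∈ K) (hs : s ∈ K) (hne : t ≠ s) : #(t ∩ s) ≤ 2 := by
  have hle : #(t ∩ s) ≤ #t := card_le_card inter_subset_left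
  have hne3 : #(t ∩ s) ≠ #t := fun heq =>
    hne (hK.eq_of_subset ht hs ((eq_of_subset_of_card_le inter_subset_left heq.ge).symm ▸
      inter_subset_right))
  have := hK.card3 t ht
  omega

lemma IsClosedSurface.exists_ne_of_subset {K : Complex} (h : IsClosedSurface K)
    {t e : Finset ℕ} (ht : t ∈ K) (he : e ⊆ t) (hc : #e = 2) :
    ∃ s ∈ K, s ≠ t ∧ e ⊆ s := by
  have h2 := h.2 e (mem_edges_of_subset ht he hc)
  obtain ⟨s, hs, hne⟩ := exists_mem_ne (by omega : 1 < #{s ∈ K | e ⊆ s}) t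
  exact ⟨s, (mem_filter.1 hs).1, hne, (mem_filter.1 hs).2⟩

lemma IsClosedSurface.eq_of_subset_of_ne {K : Complex} (h : IsClosedSurface K)
    {t e s₁ s₂ : Finset ℕ} (ht : t ∈ K) (he : e ⊆ t) (hc : #e = 2)
    (hs₁ : s₁ ∈ K) (he₁ : e ⊆ s₁) (hne₁ : s₁ ≠ t)
    (hs₂ : s₂ ∈ K) (he₂ : e ⊆ s₂) (hne₂ : s₂ ≠ t) : s₁ = s₂ := by
  by_contra hne
  have hsub : {t, s₁, s₂} ⊆ {s ∈ K | e ⊆ s} := by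
    simp [insert_subset_iff, ht, he, hs₁, he₁, hs₂, he₂]
  have := card_le_card hsub
  rw [h.2 e (mem_edges_of_subset ht he hc), card_insert_of_notMem (by simp [hne₁.symm, hne₂.symm]),
    card_pair hne] at this
  omega

lemma IsClosedSurface.exists_notMem {K : Complex} (h : IsClosedSurface K) (v : ℕ) :
    ∃ T ∈ K, v ∉ T := by
  by_contra! hall
  obtain ⟨t, ht⟩ := h.1.nonempty
  have hvt := hall t ht
  obtain ⟨s, hs, hne, hsub⟩ := h.exists_ne_of_subset ht (erase_subset v t)
    (by rw [card_erase_of_mem hvt, h.1.card3 t ht])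
  refine hne (h.1.eq_of_subset ht hs ?_).symm
  rw [← insert_erase hvt]
  exact insert_subset (hall s hs) hsub

instance (K : Complex) (v : ℕ) : DecidableRel (adjAt K v) := fun _ _ => by
  unfold adjAt; infer_instance

/-- `s ↦ t ∩ s` matches these triangles with the two edges of `t` through `v`. -/
lemma IsClosedSurface.card_filter_adjAt {K : Complex} (h : IsClosedSurface K) {v : ℕ}
    {t : Finset ℕ} (ht : t ∈ K) (hv : v ∈ t) :
    #{s ∈ {s ∈ K | v ∈ s} | adjAt K v t s} = 2 := by
  have hedges : #{e ∈ t.powersetCard 2 | v ∈ e} = 2 := by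
    rw [card_filter_powersetCard_two_mem hv, h.1.card3 t ht]
  rw [← hedges]
  refine card_nbij (t ∩ ·) ?_ ?_ ?_
  · intro s hs
    obtain ⟨-, -, -, hvs, hc⟩ := (mem_filter.1 hs).2
    simp [mem_powersetCard, hc, hv, hvs]
  · rintro s₁ hs₁ s₂ hs₂ (heq : t ∩ s₁ = t ∩ s₂)
    obtain ⟨-, hs₁K, -, -, hc⟩ := (mem_filter.1 hs₁).2
    obtain ⟨-, hs₂K, -, -, -⟩ := (mem_filter.1 hs₂).2
    have hne : ∀ s, #(t ∩ s) = 2 → s ≠ t := by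
      intro s hcs hst
      rw [hst, inter_self, h.1.card3 t ht] at hcs
      omega
    exact h.eq_of_subset_of_ne ht inter_subset_left hc hs₁K inter_subset_right (hne _ hc)
      hs₂K (heq ▸ inter_subset_right) (hne _ (heq ▸ hc))
  · intro e he
    obtain ⟨⟨het, hc⟩, hve⟩ := by simpa only [coe_filter, mem_powersetCard] using he
    obtain ⟨s, hs, hne, hes⟩ := h.exists_ne_of_subset ht het hc
    have hle := h.1.card_inter_le_two ht hs hne.symm
    have hsub : e ⊆ t ∩ s := subset_inter het hes
    have hinter : e = t ∩ s := eq_of_subset_of_card_le hsub (by omega)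
    refine ⟨s, ?_, hinter.symm⟩
    rw [mem_coe, mem_filter, mem_filter]
    exact ⟨⟨hs, hes hve⟩, ht, hs, hv, hes hve, hinter ▸ hc⟩

section Walks

variable {α : Type*} {r : α → α → Prop}

lemma reflTransGen_avoiding {x u v : α} (hxx : ¬ r x x)
    (H : ∀ a b, a ≠ x → b ≠ x → r a x → r x b →
      Relation.ReflTransGen (fun s t => s ≠ x ∧ t ≠ x ∧ r s t) a b)
    (hu : u ≠ x) (hv : v ≠ x) (huv : Relation.ReflTransGen r u v) :
    Relation.ReflTransGen (fun s t => s ≠ x ∧ t ≠ x ∧ r s t) u v := by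
  suffices ∀ w, Relation.ReflTransGen r u w →
      (w ≠ x → Relation.ReflTransGen (fun s t => s ≠ x ∧ t ≠ x ∧ r s t) u w) ∧
      (w = x → ∃ a, a ≠ x ∧ r a x ∧
        Relation.ReflTransGen (fun s t => s ≠ x ∧ t ≠ x ∧ r s t) u a) from
    (this v huv).1 hv
  intro w hw
  induction hw with
  | refl => exact ⟨fun _ => .refl, fun hux => absurd hux hu⟩
  | @tail b c _ hbc ih =>
    by_cases hbx : b = x
    · subst hbx
      obtain ⟨a, hax, hab, hua⟩ := ih.2 rfl
      exact ⟨fun hcx => hua.trans (H a c hax hcx hab hbc),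
        fun hcx => absurd (hcx ▸ hbc) hxx⟩
    · exact ⟨fun hcx => (ih.1 hbx).tail ⟨hbx, hcx, hbc⟩,
        fun hcx => ⟨b, hbx, hcx ▸ hbc, ih.1 hbx⟩⟩

lemma even_sum_card_filter [DecidableRel r] (C : Finset α) (hsym : ∀ a b, r a b → r b a)
    (hirr : ∀ a, ¬ r a a) : Even (∑ s ∈ C, #{t ∈ C | r s t}) := by
  have hpairs : ∑ s ∈ C, #{t ∈ C | r s t} = #{p ∈ C ×ˢ C | r p.1 p.2} := by
    rw [card_filter, sum_product]
    exact sum_congr rfl fun s _ => card_filter _ _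
  rw [hpairs, ← ZMod.natCast_eq_zero_iff_even, card_eq_sum_ones, Nat.cast_sum]
  refine sum_involution (fun p _ => p.swap) (fun _ _ => by decide) (fun p hp _ hswap => ?_)
    (fun p hp => ?_) (fun p _ => p.swap_swap)
  · obtain ⟨-, hpr⟩ := mem_filter.1 hp
    exact hirr p.1 (by rwa [show p.1 = p.2 from congrArg Prod.snd hswap] at hpr ⊢)
  · obtain ⟨hpm, hpr⟩ := mem_filter.1 hp
    exact mem_filter.2 ⟨mem_product.2 (mem_product.1 hpm).symm, hsym _ _ hpr⟩

/-- If `b` were not reachable, the component of `a` in the graph without `x` would have odd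
degree sum: all its vertices have degree 2 except `a`, which has degree 1. -/
lemma reflTransGen_avoiding_of_two_regular [DecidableEq α] [DecidableRel r] {S : Finset α}
    (hsym : ∀ a b, r a b → r b a) (hirr : ∀ a, ¬ r a a) (hdeg : ∀ s ∈ S, #{t ∈ S | r s t} = 2)
    {x a b : α} (hx : x ∈ S) (haS : a ∈ S) (hbS : b ∈ S) (ha : r x a) (hb : r x b) :
    Relation.ReflTransGen (fun s t => s ≠ x ∧ t ≠ x ∧ s ∈ S ∧ t ∈ S ∧ r s t) a b := by
  classical
  set r' : α → α → Prop := fun s t => s ≠ x ∧ t ≠ x ∧ s ∈ S ∧ t ∈ S ∧ r s t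
  have hax : a ≠ x := fun h => hirr x (h ▸ ha)
  by_cases hab : a = b
  · exact hab ▸ .refl
  have hNx : {t ∈ S | r x t} = {a, b} :=
    (eq_of_subset_of_card_le (by simp [insert_subset_iff, haS, hbS, ha, hb])
      (by rw [hdeg x hx, card_pair hab])).symm
  set C := {s ∈ S.erase x | Relation.ReflTransGen r' a s}
  have haC : a ∈ C := mem_filter.2 ⟨mem_erase.2 ⟨hax, haS⟩, .refl⟩
  by_contra hbC
  replace hbC : b ∉ C := fun h => hbC (mem_filter.1 h).2
  have hnbrs : ∀ s ∈ C, {t ∈ C | r s t} = {t ∈ S | r s t}.erase x := by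
    intro s hs
    obtain ⟨hsE, hsa⟩ := mem_filter.1 hs
    obtain ⟨hsx, hsS⟩ := mem_erase.1 hsE
    ext t
    simp only [C, mem_filter, mem_erase]
    exact ⟨fun ⟨⟨⟨htx, htS⟩, _⟩, hst⟩ => ⟨htx, htS, hst⟩,
      fun ⟨htx, htS, hst⟩ => ⟨⟨⟨htx, htS⟩, hsa.tail ⟨hsx, htx, hsS, htS, hst⟩⟩, hst⟩⟩
  have hdegC : ∀ s ∈ C, #{t ∈ C | r s t} + (if r x s then 1 else 0) = 2 := by
    intro s hs
    rw [hnbrs s hs, ← hdeg s (mem_of_mem_erase (mem_filter.1 hs).1)]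
    split_ifs with hxs
    · exact card_erase_add_one (mem_filter.2 ⟨hx, hsym _ _ hxs⟩)
    · rw [erase_eq_of_notMem (fun h => hxs (hsym _ _ (mem_filter.1 h).2)), add_zero]
  have hxC : {s ∈ C | r x s} = {a} := by
    ext s
    simp only [mem_filter, mem_singleton]
    refine ⟨fun ⟨hs, hxs⟩ => ?_, fun hs => hs ▸ ⟨haC, ha⟩⟩
    have : s ∈ ({a, b} : Finset α) := hNx ▸ mem_filter.2 ⟨(mem_erase.1 (mem_filter.1 hs).1).2, hxs⟩
    rcases mem_insert.1 this with h | h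
    · exact h
    · exact absurd (mem_singleton.1 h ▸ hs) hbC
  have hsum := sum_congr rfl hdegC
  rw [sum_add_distrib, ← card_filter, hxC, card_singleton, sum_const, smul_eq_mul] at hsum
  obtain ⟨k, hk⟩ := even_sum_card_filter C hsym hirr
  omega

end Walks

section EraseTriangle

variable {K : Complex} {T₀ : Finset ℕ}

lemma IsClosedSurface.reflTransGen_adjAt_erase (h : IsClosedSurface K) (v : ℕ)
    {t₁ t₂ : Finset ℕ} (h₁ : t₁ ∈ K.erase T₀) (h₂ : t₂ ∈ K.erase T₀)
    (hv₁ : v ∈ t₁) (hv₂ : v ∈ t₂) :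
    Relation.ReflTransGen (adjAt (K.erase T₀) v) t₁ t₂ := by
  obtain ⟨h₁ne, h₁K⟩ := mem_erase.1 h₁
  obtain ⟨h₂ne, h₂K⟩ := mem_erase.1 h₂
  have hsym : ∀ a b, adjAt K v a b → adjAt K v b a := fun a b ⟨ha, hb, hva, hvb, hc⟩ =>
    ⟨hb, ha, hvb, hva, inter_comm a b ▸ hc⟩
  have hirr : ∀ a, ¬ adjAt K v a a := fun a ⟨ha, _, _, _, hc⟩ => by
    rw [inter_self, h.1.card3 a ha] at hc
    omega
  have hdeg : ∀ s ∈ {t ∈ K | v ∈ t}, #{t ∈ {t ∈ K | v ∈ t} | adjAt K v s t} = 2 :=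
    fun s hs => h.card_filter_adjAt (mem_filter.1 hs).1 (mem_filter.1 hs).2
  have hdetour := reflTransGen_avoiding (r := adjAt K v) (x := T₀) (hirr T₀)
    (fun a b _ _ haT hTb => by
      have ⟨haK, hTK, hva, hvT, _⟩ := haT
      have ⟨_, hbK, _, hvb, _⟩ := hTb
      exact Relation.ReflTransGen.mono (fun s t hst => ⟨hst.1, hst.2.1, hst.2.2.2.2⟩) _ _
        (reflTransGen_avoiding_of_two_regular hsym hirr hdeg (mem_filter.2 ⟨hTK, hvT⟩)
          (mem_filter.2 ⟨haK, hva⟩) (mem_filter.2 ⟨hbK, hvb⟩) (hsym _ _ haT) hTb))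
    h₁ne h₂ne (h.1.link_conn v t₁ h₁K t₂ h₂K hv₁ hv₂)
  exact Relation.ReflTransGen.mono (fun s t ⟨hs, ht, hsK, htK, hvs, hvt, hc⟩ =>
    ⟨mem_erase.2 ⟨hs, hsK⟩, mem_erase.2 ⟨ht, htK⟩, hvs, hvt, hc⟩) _ _ hdetour

/-- Two triangles meeting a triangle `T₀` in edges share a vertex of `T₀`, so a walk through
`T₀` can be rerouted around that vertex. -/
lemma IsClosedSurface.reflTransGen_adj_erase (h : IsClosedSurface K) (hT : T₀ ∈ K)
    {t₁ t₂ : Finset ℕ} (h₁ : t₁ ∈ K.erase T₀) (h₂ : t₂ ∈ K.erase T₀) :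
    Relation.ReflTransGen (adj (K.erase T₀)) t₁ t₂ := by
  obtain ⟨h₁ne, h₁K⟩ := mem_erase.1 h₁
  obtain ⟨h₂ne, h₂K⟩ := mem_erase.1 h₂
  have hirr : ¬ adj K T₀ T₀ := fun ⟨_, _, hc⟩ => by
    rw [inter_self, h.1.card3 T₀ hT] at hc
    omega
  have hdetour := reflTransGen_avoiding (r := adj K) (x := T₀) hirr
    (fun a b haT hbT ⟨haK, _, hca⟩ ⟨_, hbK, hcb⟩ => by
      have hunion := card_le_card
        (union_subset (inter_subset_right : a ∩ T₀ ⊆ T₀) (inter_subset_left : T₀ ∩ b ⊆ T₀))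
      have := card_union_add_card_inter (a ∩ T₀) (T₀ ∩ b)
      rw [h.1.card3 T₀ hT] at hunion
      obtain ⟨w, hw⟩ := card_pos.1 (by omega : 0 < #((a ∩ T₀) ∩ (T₀ ∩ b)))
      simp only [mem_inter] at hw
      exact Relation.ReflTransGen.mono (fun s t ⟨hs, ht, _, _, hc⟩ =>
        ⟨(mem_erase.1 hs).1, (mem_erase.1 ht).1, (mem_erase.1 hs).2, (mem_erase.1 ht).2, hc⟩) _ _
        (h.reflTransGen_adjAt_erase w (mem_erase.2 ⟨haT, haK⟩) (mem_erase.2 ⟨hbT, hbK⟩)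
          hw.1.1 hw.2.2))
    h₁ne h₂ne (h.1.conn t₁ h₁K t₂ h₂K)
  exact Relation.ReflTransGen.mono (fun s t ⟨hs, ht, hsK, htK, hc⟩ =>
    ⟨mem_erase.2 ⟨hs, hsK⟩, mem_erase.2 ⟨ht, htK⟩, hc⟩) _ _ hdetour

lemma IsClosedSurface.edges_erase (h : IsClosedSurface K) :
    edges (K.erase T₀) = edges K := by
  refine Subset.antisymm (edges_mono (erase_subset _ _)) fun e he => ?_
  obtain ⟨t, htK, het, hc⟩ := mem_edges.1 he
  by_cases htT : t = T₀
  · obtain ⟨s, hsK, hst, hes⟩ := h.exists_ne_of_subset htK het hc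
    exact mem_edges_of_subset (mem_erase.2 ⟨htT ▸ hst, hsK⟩) hes hc
  · exact mem_edges_of_subset (mem_erase.2 ⟨htT, htK⟩) het hc

lemma vertices_eq_biUnion_edges (hK : ∀ t ∈ K, #t = 3) :
    vertices K = (edges K).biUnion id := by
  ext v
  simp only [mem_vertices, mem_biUnion, mem_edges, id]
  constructor
  · rintro ⟨t, ht, hv⟩
    obtain ⟨e, het, hc, hve⟩ := exists_pair_subset_mem (by rw [hK t ht]; omega) hv
    exact ⟨e, ⟨t, ht, het, hc⟩, hve⟩
  · rintro ⟨e, ⟨t, ht, het, -⟩, hve⟩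
    exact ⟨t, ht, het hve⟩

lemma IsClosedSurface.vertices_erase (h : IsClosedSurface K) :
    vertices (K.erase T₀) = vertices K := by
  rw [vertices_eq_biUnion_edges fun t ht => h.1.card3 t (mem_of_mem_erase ht),
    vertices_eq_biUnion_edges h.1.card3, h.edges_erase]

lemma IsClosedSurface.card_filter_subset_erase (h : IsClosedSurface K) (hT : T₀ ∈ K)
    {e : Finset ℕ} (he : e ∈ edges K) :
    #{t ∈ K.erase T₀ | e ⊆ t} = if e ⊆ T₀ then 1 else 2 := by
  rw [filter_erase]
  split_ifs with heT
  · rw [card_erase_of_mem (mem_filter.2 ⟨hT, heT⟩), h.2 e he]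
  · rw [erase_eq_of_notMem fun h => heT (mem_filter.1 h).2, h.2 e he]

lemma IsClosedSurface.bdryEdges_erase (h : IsClosedSurface K) (hT : T₀ ∈ K) :
    bdryEdges (K.erase T₀) = T₀.powersetCard 2 := by
  ext e
  simp only [bdryEdges, mem_filter, mem_powersetCard, h.edges_erase]
  constructor
  · rintro ⟨he, hc⟩
    rw [h.card_filter_subset_erase hT he] at hc
    split_ifs at hc with heT
    · obtain ⟨-, -, -, hc₂⟩ := mem_edges.1 he
      exact ⟨heT, hc₂⟩
    · omega
  · rintro ⟨heT, hc⟩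
    have he := mem_edges_of_subset hT heT hc
    exact ⟨he, by rw [h.card_filter_subset_erase hT he, if_pos heT]⟩

lemma IsClosedSurface.intVertices_erase (h : IsClosedSurface K) (hT : T₀ ∈ K) :
    intVertices (K.erase T₀) = vertices K \ T₀ := by
  rw [intVertices, bdryVertices, h.bdryEdges_erase hT, h.vertices_erase,
    biUnion_powersetCard_two (by rw [h.1.card3 T₀ hT]; omega)]

lemma IsClosedSurface.isSurface_erase (h : IsClosedSurface K) (hT : T₀ ∈ K) :
    IsSurface (K.erase T₀) where
  nonempty := by
    obtain ⟨e, he, hc⟩ := exists_subset_card_eq (s := T₀) (n := 2) (by rw [h.1.card3 T₀ hT]; omega)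
    obtain ⟨t, htK, htT, -⟩ := h.exists_ne_of_subset hT he hc
    exact ⟨t, mem_erase.2 ⟨htT, htK⟩⟩
  card3 t ht := h.1.card3 t (mem_of_mem_erase ht)
  edge_le e he := by
    rw [h.card_filter_subset_erase hT (edges_mono (erase_subset _ _) he)]
    split_ifs <;> omega
  link_conn v t₁ h₁ t₂ h₂ hv₁ hv₂ := h.reflTransGen_adjAt_erase v h₁ h₂ hv₁ hv₂
  conn t₁ h₁ t₂ h₂ := h.reflTransGen_adj_erase hT h₁ h₂

lemma IsClosedSurface.isDisc_erase (h : IsClosedSurface K) (hsph : eulerChar K = 2)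
    (hT : T₀ ∈ K) : IsDisc (K.erase T₀) := by
  refine ⟨h.isSurface_erase hT, ?_, ?_⟩
  · rw [eulerChar, h.vertices_erase, h.edges_erase, card_erase_of_mem hT,
      Nat.cast_pred (card_pos.2 ⟨T₀, hT⟩)]
    rw [eulerChar] at hsph
    omega
  · rw [h.bdryEdges_erase hT]
    exact powersetCard_nonempty.2 (by rw [h.1.card3 T₀ hT]; omega)

end EraseTriangle

lemma isSurface_singleton {t : Finset ℕ} (ht : #t = 3) : IsSurface {t} where
  nonempty := singleton_nonempty t
  card3 s hs := mem_singleton.1 hs ▸ ht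
  edge_le _ _ := (card_le_card (filter_subset _ _)).trans (by simp)
  link_conn _ t₁ h₁ t₂ h₂ _ _ := by rw [mem_singleton.1 h₁, mem_singleton.1 h₂]
  conn t₁ h₁ t₂ h₂ := by rw [mem_singleton.1 h₁, mem_singleton.1 h₂]

lemma eulerChar_singleton {t : Finset ℕ} (ht : #t = 3) : eulerChar {t} = 1 := by
  rw [eulerChar, vertices_singleton, edges_singleton, card_powersetCard, ht, card_singleton]
  norm_num

lemma IsClosedSurface.circleInter_singleton_erase {K : Complex} (h : IsClosedSurface K)
    {T₀ : Finset ℕ} (hT : T₀ ∈ K) : CircleInter {T₀} (K.erase T₀) := by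
  have h3 := h.1.card3 T₀ hT
  have hE : edges {T₀} ∩ edges (K.erase T₀) = T₀.powersetCard 2 := by
    rw [edges_singleton, h.edges_erase, inter_eq_left]
    exact fun e he => mem_edges_of_subset hT (mem_powersetCard.1 he).1 (mem_powersetCard.1 he).2
  refine ⟨hE ▸ Or.inl (isCircle_powersetCard_two h3), ?_⟩
  rw [hE, vertices_singleton, h.vertices_erase, biUnion_powersetCard_two (by omega),
    inter_eq_left]
  exact subset_vertices hT

lemma IsClosedSurface.isDecomp_singleton_erase {K : Complex} (h : IsClosedSurface K)
    (hsph : eulerChar K = 2) {T₀ : Finset ℕ} (hT : T₀ ∈ K) {v : ℕ} (hvK : v ∈ vertices K)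
    (hvT : v ∉ T₀) (hval : valence K v = mv K) :
    IsDecomp K {T₀} (K.erase T₀) ∅ where
  closed := h
  subG := singleton_subset_iff.2 hT
  subD := erase_subset _ _
  subDs := by simp
  surfG := isSurface_singleton (h.1.card3 T₀ hT)
  discD := h.isDisc_erase hsph hT
  discDs := by simp
  maxv := ⟨v, by rw [h.intVertices_erase hT]; exact mem_sdiff.2 ⟨hvK, hvT⟩, hval⟩
  cover := by rw [sup_empty, bot_eq_empty, union_empty, ← insert_eq, insert_erase hT]
  disjGD := by simp
  disjGDs := by simp
  disjDDs := by simp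
  disjDsDs := by simp
  interGD := h.circleInter_singleton_erase hT
  interGDs := by simp
  interDDs := by simp
  interDsDs := by simp

lemma IsSurface.exists_valence_eq_mv {K : Complex} (hK : IsSurface K) :
    ∃ v ∈ vertices K, valence K v = mv K := by
  obtain ⟨t, ht⟩ := hK.nonempty
  obtain ⟨v, hv⟩ := card_pos.1 (by rw [hK.card3 t ht]; omega : 0 < #t)
  obtain ⟨w, hw, hsup⟩ := exists_mem_eq_sup (vertices K) ⟨v, subset_vertices ht hv⟩ (valence K)
  exact ⟨w, hw, hsup.symm⟩

section Counting

variable {β γ : Type*}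

lemma sum_card_eq_sum_card_filter_mem [DecidableEq γ] (s : Finset β)
    {U : Finset γ} (A : β → Finset γ) (hA : ∀ b ∈ s, A b ⊆ U) :
    ∑ b ∈ s, #(A b) = ∑ u ∈ U, #{b ∈ s | u ∈ A b} := by
  refine (sum_congr rfl fun b hb => ?_).trans
    (sum_card_bipartiteAbove_eq_sum_card_bipartiteBelow (t := U) (fun b u => u ∈ A b))
  rw [bipartiteAbove, filter_mem_eq_inter, inter_eq_right.2 (hA b hb)]

lemma sum_card_inter_offDiag [DecidableEq β] [DecidableEq γ] (s : Finset β)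
    {U : Finset γ} (A : β → Finset γ) (hA : ∀ b ∈ s, A b ⊆ U) :
    ∑ q ∈ s.offDiag, #(A q.1 ∩ A q.2) = ∑ u ∈ U, #{b ∈ s | u ∈ A b}.offDiag := by
  rw [sum_card_eq_sum_card_filter_mem s.offDiag (fun q => A q.1 ∩ A q.2)
    fun q hq => inter_subset_left.trans (hA _ (mem_offDiag.1 hq).1)]
  refine sum_congr rfl fun u _ => congrArg card ?_
  ext q
  simp only [mem_filter, mem_offDiag, mem_inter]
  tauto

lemma card_offDiag_eq [DecidableEq β] (s : Finset β) : (#s.offDiag : ℤ) = #s * (#s - 1) := by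
  rw [offDiag_card, Nat.cast_sub (Nat.le_mul_self _)]
  push_cast
  ring

variable {K : Complex} {pieces : Finset Complex}

lemma card_filter_mem_edges_le_two (hK : IsSurface K) (hsub : ∀ P ∈ pieces, P ⊆ K)
    (hdisj : (pieces : Set Complex).PairwiseDisjoint id) {e : Finset ℕ} (he : e ∈ edges K) :
    #{P ∈ pieces | e ∈ edges P} ≤ 2 := by
  refine (card_le_card_of_forall_subsingleton (fun P t => t ∈ P ∧ e ⊆ t)
    (t := {t ∈ K | e ⊆ t}) (fun P hP => ?_) fun t _ => ?_).trans (hK.edge_le e he)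
  · obtain ⟨hP, heP⟩ := mem_filter.1 hP
    obtain ⟨t, ht, het, -⟩ := mem_edges.1 heP
    exact ⟨t, mem_filter.2 ⟨hsub P hP ht, het⟩, ht, het⟩
  · rintro P ⟨hP, htP, -⟩ Q ⟨hQ, htQ, -⟩
    exact hdisj.elim_finset (mem_filter.1 hP).1 (mem_filter.1 hQ).1 t htP htQ

lemma sum_card_offDiag_vertices_eq_edges (hsub : ∀ P ∈ pieces, P ⊆ K)
    (hcirc : ∀ P ∈ pieces, ∀ Q ∈ pieces, P ≠ Q →
      #(vertices P ∩ vertices Q) = #(edges P ∩ edges Q)) :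
    ∑ v ∈ vertices K, #{P ∈ pieces | v ∈ vertices P}.offDiag =
      ∑ e ∈ edges K, #{P ∈ pieces | e ∈ edges P}.offDiag := by
  rw [← sum_card_inter_offDiag pieces vertices fun P hP => vertices_mono (hsub P hP),
    ← sum_card_inter_offDiag pieces edges fun P hP => edges_mono (hsub P hP)]
  exact sum_congr rfl fun q hq =>
    hcirc _ (mem_offDiag.1 hq).1 _ (mem_offDiag.1 hq).2.1 (mem_offDiag.1 hq).2.2

/-- If a vertex lies in `m` pieces and an edge in `p ∈ {1, 2}` pieces, then
`∑ m (m - 1) = ∑ p (p - 1)`, hence `∑ (m - 1) ≤ ∑ (p - 1)`, and the difference of the two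
sides is `χ(K) - ∑ χ(P)`. -/
theorem sum_eulerChar_le (hK : IsSurface K) (hcover : pieces.sup id = K)
    (hdisj : (pieces : Set Complex).PairwiseDisjoint id)
    (hcirc : ∀ P ∈ pieces, ∀ Q ∈ pieces, P ≠ Q →
      #(vertices P ∩ vertices Q) = #(edges P ∩ edges Q)) :
    ∑ P ∈ pieces, eulerChar P ≤ eulerChar K := by
  have hsub : ∀ P ∈ pieces, P ⊆ K := fun P hP => hcover ▸ le_sup (f := id) hP
  set m : ℕ → ℕ := fun v => #{P ∈ pieces | v ∈ vertices P}
  set p : Finset ℕ → ℕ := fun e => #{P ∈ pieces | e ∈ edges P}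
  have hV := sum_card_eq_sum_card_filter_mem pieces vertices
    fun P hP => vertices_mono (hsub P hP)
  have hE := sum_card_eq_sum_card_filter_mem pieces edges fun P hP => edges_mono (hsub P hP)
  have hT : ∑ P ∈ pieces, #P = #K := by
    rw [← hcover, sup_eq_biUnion, card_biUnion hdisj]
    rfl
  have hshared : ∑ v ∈ vertices K, (m v : ℤ) * (m v - 1) =
      ∑ e ∈ edges K, (p e : ℤ) * (p e - 1) := by
    simp only [m, p, ← card_offDiag_eq, ← Nat.cast_sum]
    exact congrArg _ (sum_card_offDiag_vertices_eq_edges hsub hcirc)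
  have hp : ∀ e ∈ edges K, (p e : ℤ) * (p e - 1) = 2 * (p e - 1) := by
    intro e he
    obtain ⟨t, ht, het, hc⟩ := mem_edges.1 he
    obtain ⟨P, hP, htP⟩ := mem_sup.1 (hcover ▸ ht : t ∈ pieces.sup id)
    have h1 : 1 ≤ p e := card_pos.2 ⟨P, mem_filter.2 ⟨hP, mem_edges_of_subset htP het hc⟩⟩
    have h2 : p e ≤ 2 := card_filter_mem_edges_le_two hK hsub hdisj he
    interval_cases p e <;> norm_num
  have hm : ∀ v, 2 * ((m v : ℤ) - 1) ≤ m v * (m v - 1) := fun v => by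
    rcases m v with _ | _ | k <;> push_cast
    nlinarith
  have hdefect : 2 * ∑ v ∈ vertices K, ((m v : ℤ) - 1) ≤ 2 * ∑ e ∈ edges K, ((p e : ℤ) - 1) := by
    rw [mul_sum, mul_sum, ← sum_congr rfl hp, ← hshared]
    exact sum_le_sum fun v _ => hm v
  simp only [sum_sub_distrib, sum_const, nsmul_eq_mul, mul_one] at hdefect
  simp only [eulerChar, sum_add_distrib, sum_sub_distrib]
  push_cast [← hV, ← hE, ← hT]
  linarith

end Counting

lemma CircleInter.card_vertices_inter {A B : Complex} (h : CircleInter A B) :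
    #(vertices A ∩ vertices B) = #(edges A ∩ edges B) := by
  rw [h.2]
  rcases h.1 with hc | hc
  · exact hc.card_biUnion
  · simp [hc]

lemma forall_mem_insert_insert_of_symm {β : Type*} [DecidableEq β] {p : β → β → Prop}
    (hp : ∀ a b, p a b → p b a) {x y : β} {s : Finset β} (hxy : p x y)
    (hxs : ∀ z ∈ s, p x z) (hys : ∀ z ∈ s, p y z) (hs : ∀ a ∈ s, ∀ b ∈ s, a ≠ b → p a b) :
    ∀ a ∈ insert x (insert y s), ∀ b ∈ insert x (insert y s), a ≠ b → p a b := by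
  intro a ha b hb hab
  simp only [mem_insert] at ha hb
  rcases ha with rfl | rfl | ha <;> rcases hb with rfl | rfl | hb <;> grind

variable {K G D : Complex} {Ds : Finset Complex}

lemma IsDecomp.pairwise (hd : IsDecomp K G D Ds) :
    ∀ P ∈ insert G (insert D Ds), ∀ Q ∈ insert G (insert D Ds), P ≠ Q →
      Disjoint P Q ∧ #(vertices P ∩ vertices Q) = #(edges P ∩ edges Q) := by
  refine forall_mem_insert_insert_of_symm (fun P Q ⟨hdisj, hcard⟩ => ⟨hdisj.symm, ?_⟩)
    ⟨hd.disjGD, hd.interGD.card_vertices_inter⟩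
    (fun P hP => ⟨hd.disjGDs P hP, (hd.interGDs P hP).card_vertices_inter⟩)
    (fun P hP => ⟨hd.disjDDs P hP, (hd.interDDs P hP).card_vertices_inter⟩)
    (fun P hP Q hQ hne =>
      ⟨hd.disjDsDs P hP Q hQ hne, (hd.interDsDs P hP Q hQ hne).card_vertices_inter⟩)
  rwa [inter_comm, inter_comm (edges Q)]

lemma IsDecomp.eulerChar_add_card_le (hd : IsDecomp K G D Ds) :
    eulerChar G + 1 + #Ds ≤ eulerChar K := by
  have hG : G ∉ insert D Ds := by
    simp only [mem_insert, not_or]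
    refine ⟨fun hGD => ?_, fun hG => ?_⟩
    · exact hd.surfG.nonempty.ne_empty (disjoint_self.1 (hGD ▸ hd.disjGD))
    · exact hd.surfG.nonempty.ne_empty (disjoint_self.1 (hd.disjGDs G hG))
  have hD : D ∉ Ds := fun hD => hd.discD.1.nonempty.ne_empty (disjoint_self.1 (hd.disjDDs D hD))
  have hsum := sum_eulerChar_le (pieces := insert G (insert D Ds)) hd.closed.1
    (by rw [sup_insert, sup_insert, ← sup_assoc, ← hd.cover]; rfl)
    (fun P hP Q hQ hne => (hd.pairwise P hP Q hQ hne).1)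
    (fun P hP Q hQ hne => (hd.pairwise P hP Q hQ hne).2)
  rw [sum_insert hG, sum_insert hD, hd.discD.2.1,
    sum_congr rfl fun P hP => (hd.discDs P hP).2.1] at hsum
  simpa [add_assoc] using hsum

lemma IsDecomp.eq_erase {T₀ : Finset ℕ} (hd : IsDecomp K {T₀} D ∅) : D = K.erase T₀ := by
  have hcover := hd.cover
  rw [sup_empty, bot_eq_empty, union_empty, ← insert_eq] at hcover
  rw [← hcover, erase_insert (disjoint_singleton_left.1 hd.disjGD)]

/-- the minimal decompositions of a triangulated sphere are
exactly those of the form ({T₀}, T \ {T₀}, ∅) with a maximal-valence vertex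
outside T₀. -/
theorem sphere_minimal_decompositions (K : Complex) (h : IsClosedSurface K)
    (hsph : eulerChar K = 2) (G D : Complex) (Ds : Finset Complex) :
    IsMinDecomp K G D Ds ↔
      ∃ T₀ ∈ K, G = {T₀} ∧ D = K.erase T₀ ∧ Ds = ∅ ∧
        ∃ v ∈ vertices K, v ∉ T₀ ∧ valence K v = mv K := by
  constructor
  · rintro ⟨hd, hmin⟩
    obtain ⟨v, hvK, hv⟩ := h.1.exists_valence_eq_mv
    obtain ⟨T, hT, hvT⟩ := h.exists_notMem v
    have hG : #G = 1 := le_antisymm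
      (by simpa using hmin _ _ _ (h.isDecomp_singleton_erase hsph hT hvK hvT hv))
      (card_pos.2 hd.surfG.nonempty)
    obtain ⟨T₀, rfl⟩ := card_eq_one.1 hG
    have hT₀ : T₀ ∈ K := hd.subG (mem_singleton_self T₀)
    have hDs : Ds = ∅ := by
      have := hd.eulerChar_add_card_le
      rw [eulerChar_singleton (h.1.card3 T₀ hT₀), hsph] at this
      exact card_eq_zero.1 (by omega)
    subst hDs
    obtain ⟨w, hw, hwv⟩ := hd.maxv
    rw [hd.eq_erase, h.intVertices_erase hT₀, mem_sdiff] at hw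
    exact ⟨T₀, hT₀, rfl, hd.eq_erase, rfl, w, hw.1, hw.2, hwv⟩
  · rintro ⟨T₀, hT₀, rfl, rfl, rfl, v, hvK, hvT, hv⟩
    exact ⟨h.isDecomp_singleton_erase hsph hT₀ hvK hvT hv,
      fun _ _ _ hd => by simpa using card_pos.2 hd.surfG.nonempty⟩

end Tri
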